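/- arXiv:2407.17935 — 3 statements merged into one kernel-verified Lean document; each statement's English description precedes it below -/
import Mathlib

section
/- Let σ > 0 and x ∈ ℝ. The sequence r_p := (Γ(p+1)/Γ(σ+1)) · F_{p,σ}(x), where F_{p,σ}(x) := ∑_{j=0}^p Γ(p-j+σ+1)/(Γ(j+1)Γ(p-j+1)) · x^j, is the unique solution with r_0 = 1, r_1 = x + 1 + σ of the recurrence r_{p+1} + x·p·r_{p-1} = (x + p + 1 + σ)·r_p for p ≥ 1. -/
/-- `F_{p,σ}(x) = ∑_{j=0}^p Γ(p-j+σ+1)/(Γ(j+1)Γ(p-j+1)) x^j`. -/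
noncomputable def Fsigma (σ : ℝ) (p : ℕ) (x : ℝ) : ℝ :=
  ∑ j ∈ Finset.range (p + 1),
    Real.Gamma ((p : ℝ) - j + σ + 1) / (Real.Gamma (j + 1) * Real.Gamma ((p : ℝ) - j + 1)) * x ^ j

/-- `r_p = Γ(p+1)/Γ(σ+1) · F_{p,σ}(x)`. -/
noncomputable def Rsol (σ x : ℝ) (p : ℕ) : ℝ :=
  Real.Gamma ((p : ℝ) + 1) / Real.Gamma (σ + 1) * Fsigma σ p x

/-- Rising factorial `(σ+1)(σ+2)⋯(σ+m)`. -/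
noncomputable def Rr (σ : ℝ) (m : ℕ) : ℝ := ∏ i ∈ Finset.range m, (σ + 1 + i)

/-- Alternate form of `Rsol`: `∑ C(p,j) (σ+1)^{(p-j)} x^j`. -/
noncomputable def Ssum (σ x : ℝ) (p : ℕ) : ℝ :=
  ∑ j ∈ Finset.range (p + 1), ((p.choose j : ℝ)) * Rr σ (p - j) * x ^ j

lemma Rr_succ (σ : ℝ) (m : ℕ) : Rr σ (m + 1) = Rr σ m * (σ + 1 + m) :=
  Finset.prod_range_succ _ _

lemma Gamma_add_nat (σ : ℝ) (hσ : 0 < σ) (m : ℕ) :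
    Real.Gamma (σ + 1 + m) = Real.Gamma (σ + 1) * Rr σ m := by
  induction m with
  | zero => simp [Rr]
  | succ n ih =>
    have hn : (0:ℝ) ≤ (n:ℝ) := Nat.cast_nonneg n
    have hpos : (0:ℝ) < σ + 1 + n := by linarith
    have h : σ + 1 + ((n + 1 : ℕ) : ℝ) = (σ + 1 + n) + 1 := by push_cast; ring
    rw [h, Real.Gamma_add_one (ne_of_gt hpos), ih, Rr_succ]
    ring

lemma Rsol_eq_Ssum (σ x : ℝ) (hσ : 0 < σ) (p : ℕ) : Rsol σ x p = Ssum σ x p := by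
  unfold Rsol Fsigma Ssum
  rw [Finset.mul_sum]
  refine Finset.sum_congr rfl fun j hj => ?_
  have hj' : j ≤ p := Nat.lt_succ_iff.mp (Finset.mem_range.mp hj)
  have h1 : (p:ℝ) - j + σ + 1 = σ + 1 + ((p - j : ℕ) : ℝ) := by
    rw [Nat.cast_sub hj']; ring
  have h2 : (p:ℝ) - j + 1 = ((p - j : ℕ) : ℝ) + 1 := by rw [Nat.cast_sub hj']
  have h3 : Real.Gamma ((j:ℝ) + 1) = (Nat.factorial j : ℝ) := Real.Gamma_nat_eq_factorial j
  have h4 : Real.Gamma ((p:ℝ) + 1) = (Nat.factorial p : ℝ) := Real.Gamma_nat_eq_factorial p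
  have h5 : Real.Gamma (((p - j : ℕ) : ℝ) + 1) = (Nat.factorial (p - j) : ℝ) :=
    Real.Gamma_nat_eq_factorial (p - j)
  rw [h1, h2, Gamma_add_nat σ hσ, h3, h4, h5, Nat.cast_choose ℝ hj']
  have hΓ : Real.Gamma (σ + 1) ≠ 0 := ne_of_gt (Real.Gamma_pos_of_pos (by linarith))
  have hf1 : (Nat.factorial j : ℝ) ≠ 0 := Nat.cast_ne_zero.mpr (Nat.factorial_ne_zero j)
  have hf2 : (Nat.factorial (p - j) : ℝ) ≠ 0 := Nat.cast_ne_zero.mpr (Nat.factorial_ne_zero (p - j))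
  field_simp

lemma key (σ : ℝ) (q j : ℕ) (hj : j ≤ q + 1) :
    (((q+2).choose (j+1) : ℝ)) * Rr σ (q+1-j) + ((q:ℝ)+1) * ((q.choose j : ℝ)) * Rr σ (q-j)
      = (((q+1).choose j : ℝ)) * Rr σ (q+1-j)
        + ((q:ℝ)+1+1+σ) * (((q+1).choose (j+1) : ℝ)) * Rr σ (q-j) := by
  rcases Nat.lt_or_ge j (q+1) with h | h
  · have hjq : j ≤ q := Nat.lt_succ_iff.mp h
    have hm : q + 1 - j = (q - j) + 1 := by omega
    have hpas : (((q+2).choose (j+1) : ℕ) : ℝ) = ((q+1).choose j : ℝ) + ((q+1).choose (j+1) : ℝ) := by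
      rw [show q+2 = (q+1)+1 from rfl, Nat.choose_succ_succ]; push_cast; ring
    have habs : ((q:ℝ)+1) * (q.choose j : ℝ) = ((j:ℝ)+1) * (((q+1).choose (j+1) : ℕ) : ℝ) := by
      have h0 := Nat.add_one_mul_choose_eq q j
      have h1 := congrArg (fun n : ℕ => (n : ℝ)) h0
      push_cast at h1
      linarith
    have hcast : ((q - j : ℕ) : ℝ) = (q:ℝ) - j := by rw [Nat.cast_sub hjq]
    rw [hm, Rr_succ, hpas]
    linear_combination Rr σ (q - j) * habs + (((q+1).choose (j+1) : ℝ)) * Rr σ (q - j) * hcast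
  · have hj1 : j = q + 1 := le_antisymm hj h
    subst hj1
    simp [Nat.choose_succ_self, Nat.sub_self, Rr, Nat.choose_eq_zero_of_lt]

lemma Ssum_rec (σ x : ℝ) (p : ℕ) (hp : 1 ≤ p) :
    Ssum σ x (p+1) + x * p * Ssum σ x (p-1) = (x + p + 1 + σ) * Ssum σ x p := by
  obtain ⟨q, rfl⟩ : ∃ q, p = q + 1 := ⟨p - 1, by omega⟩
  simp only [Nat.add_sub_cancel]
  push_cast
  have hA : Ssum σ x (q+2) =
      (∑ j ∈ Finset.range (q+2), (((q+2).choose (j+1) : ℝ)) * Rr σ (q+1-j) * x ^ (j+1))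
        + Rr σ (q+2) := by
    rw [Ssum, Finset.sum_range_succ']
    simp [Nat.succ_sub_succ]
  have hU : x * ((q:ℝ)+1) * Ssum σ x q =
      ∑ j ∈ Finset.range (q+2), ((q:ℝ)+1) * ((q.choose j : ℝ)) * Rr σ (q-j) * x ^ (j+1) := by
    rw [Ssum, Finset.mul_sum, Finset.sum_range_succ (n := q+1)]
    rw [Nat.choose_eq_zero_of_lt (by omega)]
    simp only [Nat.cast_zero, zero_mul, mul_zero, add_zero]
    refine Finset.sum_congr rfl fun j hj => ?_
    ring
  have hX : x * Ssum σ x (q+1) =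
      ∑ j ∈ Finset.range (q+2), (((q+1).choose j : ℝ)) * Rr σ (q+1-j) * x ^ (j+1) := by
    rw [Ssum, Finset.mul_sum]
    refine Finset.sum_congr rfl fun j hj => ?_
    ring
  have hB : ((q:ℝ)+1+1+σ) * Ssum σ x (q+1) =
      (∑ j ∈ Finset.range (q+2),
        ((q:ℝ)+1+1+σ) * (((q+1).choose (j+1) : ℝ)) * Rr σ (q-j) * x ^ (j+1))
        + ((q:ℝ)+1+1+σ) * Rr σ (q+1) := by
    have e1 : (∑ j ∈ Finset.range (q+2),
          ((q:ℝ)+1+1+σ) * (((q+1).choose (j+1) : ℝ)) * Rr σ (q-j) * x ^ (j+1))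
        = ∑ j ∈ Finset.range (q+1),
          ((q:ℝ)+1+1+σ) * (((q+1).choose (j+1) : ℝ)) * Rr σ (q-j) * x ^ (j+1) := by
      rw [Finset.sum_range_succ, Nat.choose_eq_zero_of_lt (by omega)]
      simp
    rw [e1, Ssum, Finset.sum_range_succ', mul_add, Finset.mul_sum]
    simp only [Nat.succ_sub_succ, Nat.choose_zero_right, Nat.cast_one, one_mul,
      Nat.sub_zero, pow_zero, mul_one]
    refine congrArg₂ (· + ·) (Finset.sum_congr rfl fun j hj => by ring) rfl
  have hsum : ∑ j ∈ Finset.range (q+2),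
        ((((q+2).choose (j+1) : ℝ)) * Rr σ (q+1-j) * x ^ (j+1)
          + ((q:ℝ)+1) * ((q.choose j : ℝ)) * Rr σ (q-j) * x ^ (j+1))
      = ∑ j ∈ Finset.range (q+2),
        ((((q+1).choose j : ℝ)) * Rr σ (q+1-j) * x ^ (j+1)
          + ((q:ℝ)+1+1+σ) * (((q+1).choose (j+1) : ℝ)) * Rr σ (q-j) * x ^ (j+1)) := by
    refine Finset.sum_congr rfl fun j hj => ?_
    have hj' : j ≤ q + 1 := Nat.lt_succ_iff.mp (Finset.mem_range.mp hj)
    have hk := key σ q j hj'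
    linear_combination x ^ (j+1) * hk
  rw [Finset.sum_add_distrib, Finset.sum_add_distrib] at hsum
  have hbound : Rr σ (q+2) = ((q:ℝ)+1+1+σ) * Rr σ (q+1) := by
    rw [Rr_succ]; push_cast; ring
  have hRHS : (x + ((q:ℝ)+1) + 1 + σ) * Ssum σ x (q+1)
      = x * Ssum σ x (q+1) + ((q:ℝ)+1+1+σ) * Ssum σ x (q+1) := by ring
  rw [hRHS, hA, hU, hX, hB]
  linarith [hsum, hbound]

theorem stmt_1 (σ x : ℝ) (hσ : 0 < σ) :
    (Rsol σ x 0 = 1 ∧ Rsol σ x 1 = x + 1 + σ ∧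
      ∀ p : ℕ, 1 ≤ p →
        Rsol σ x (p + 1) + x * p * Rsol σ x (p - 1) = (x + p + 1 + σ) * Rsol σ x p) ∧
    ∀ r : ℕ → ℝ,
      (r 0 = 1 ∧ r 1 = x + 1 + σ ∧
        ∀ p : ℕ, 1 ≤ p → r (p + 1) + x * p * r (p - 1) = (x + p + 1 + σ) * r p) →
      ∀ p, r p = Rsol σ x p := by
  have h0 : Rsol σ x 0 = 1 := by
    rw [Rsol_eq_Ssum σ x hσ]; simp [Ssum, Rr]
  have h1 : Rsol σ x 1 = x + 1 + σ := by
    rw [Rsol_eq_Ssum σ x hσ]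
    simp [Ssum, Rr, Finset.sum_range_succ, Finset.prod_range_succ]
    ring
  have hrec : ∀ p : ℕ, 1 ≤ p →
      Rsol σ x (p + 1) + x * p * Rsol σ x (p - 1) = (x + p + 1 + σ) * Rsol σ x p := by
    intro p hp
    rw [Rsol_eq_Ssum σ x hσ, Rsol_eq_Ssum σ x hσ, Rsol_eq_Ssum σ x hσ]
    exact Ssum_rec σ x p hp
  refine ⟨⟨h0, h1, hrec⟩, ?_⟩
  rintro r ⟨hr0, hr1, hr⟩
  have key2 : ∀ p, r p = Rsol σ x p ∧ r (p+1) = Rsol σ x (p+1) := by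
    intro p
    induction p with
    | zero => exact ⟨by rw [hr0, h0], by rw [hr1, h1]⟩
    | succ n ih =>
      refine ⟨ih.2, ?_⟩
      have e1 := hr (n+1) (by omega)
      have e2 := hrec (n+1) (by omega)
      simp only [Nat.add_sub_cancel] at e1 e2
      rw [ih.1, ih.2] at e1
      linarith [e1, e2]
  exact fun p => (key2 p).1
end

section
/- Define \hat{κ}(z,w) := (zw)³·κ(z,w), where κ is as in the previous context (the limiting origin pre-kernel). Then \hat{κ} satisfies the differential equation [z ∂_z² − (2z²+2) ∂_z − 2z] \hat{κ}(z,w) = 4(zw)³ e^{2zw} for all z, w ∈ ℂ. -/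
/-- Entire extension of the error function: `erf z = (2/√π) ∫_0^z e^{-t²} dt`,
parametrized along the segment from `0` to `z`. -/
noncomputable def cerf (z : ℂ) : ℂ :=
  (2 / Real.sqrt Real.pi : ℂ) * z * ∫ t in (0 : ℝ)..1, Complex.exp (-((t : ℂ) * z) ^ 2)

/-- The limiting bulk pre-overlap kernel at the origin. -/

noncomputable def kappaOrigin (z w : ℂ) : ℂ :=
  (Real.sqrt Real.pi / 4 : ℂ) * ((2 * z ^ 2 - 1) * (2 * w ^ 2 - 1) / (z * w) ^ 3) *
      Complex.exp (z ^ 2 + w ^ 2) * (cerf (z - w) + cerf w - cerf z)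
    - z * (2 * w ^ 2 - 1) / (2 * (z * w) ^ 3) * Complex.exp (w ^ 2)
    + w * (2 * z ^ 2 - 1) / (2 * (z * w) ^ 3) * Complex.exp (z ^ 2)
    - (z - w) / (2 * (z * w) ^ 3) * Complex.exp (2 * z * w)

/-- The entire extension of `(zw)³ κ(z,w)`. -/
noncomputable def hatKappaOrigin (z w : ℂ) : ℂ :=
  (Real.sqrt Real.pi / 4 : ℂ) * (2 * z ^ 2 - 1) * (2 * w ^ 2 - 1) *
      Complex.exp (z ^ 2 + w ^ 2) * (cerf (z - w) + cerf w - cerf z)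
    - z * (2 * w ^ 2 - 1) / 2 * Complex.exp (w ^ 2)
    + w * (2 * z ^ 2 - 1) / 2 * Complex.exp (z ^ 2)
    - (z - w) / 2 * Complex.exp (2 * z * w)

lemma hasDerivAt_cerf (z : ℂ) :
    HasDerivAt cerf ((2 / Real.sqrt Real.pi : ℂ) * Complex.exp (-z ^ 2)) z := by
  have key : HasDerivAt (fun x : ℂ => ∫ t in (0:ℝ)..1, x * Complex.exp (-((t:ℂ)*x)^2))
      (∫ t in (0:ℝ)..1, Complex.exp (-((t:ℂ)*z)^2) * (1 - 2*(t:ℂ)^2*z^2)) z := by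
    refine (intervalIntegral.hasDerivAt_integral_of_dominated_loc_of_deriv_le
      (F := fun (x : ℂ) (t : ℝ) => x * Complex.exp (-((t:ℂ)*x)^2))
      (F' := fun (x : ℂ) (t : ℝ) => Complex.exp (-((t:ℂ)*x)^2) * (1 - 2*(t:ℂ)^2*x^2))
      (bound := fun _ => Real.exp ((‖z‖+1)^2) * (1 + 2*(‖z‖+1)^2))
      (μ := MeasureTheory.volume) (a := 0) (b := 1) (x₀ := z) (Metric.ball_mem_nhds z one_pos)
      ?_ ?_ ?_ ?_ ?_ ?_).2
    · exact Filter.Eventually.of_forall fun x => (Continuous.aestronglyMeasurable (by fun_prop))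
    · exact Continuous.intervalIntegrable (by fun_prop) _ _
    · exact Continuous.aestronglyMeasurable (by fun_prop)
    · refine Filter.Eventually.of_forall fun t ht x hx => ?_
      rw [Set.uIoc_of_le (zero_le_one)] at ht
      have ht1 : |t| ≤ 1 := by rw [abs_le]; constructor <;> [linarith [ht.1]; exact ht.2]
      have hxn : ‖x‖ ≤ ‖z‖ + 1 := by
        have := mem_ball_iff_norm.mp hx
        have h2 : ‖x‖ - ‖z‖ ≤ ‖x - z‖ := norm_sub_norm_le x z
        linarith
      have hz0 : (0:ℝ) ≤ ‖z‖ + 1 := by positivity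
      rw [norm_mul]
      have h1 : ‖Complex.exp (-((t:ℂ)*x)^2)‖ ≤ Real.exp ((‖z‖+1)^2) := by
        rw [Complex.norm_exp]
        apply Real.exp_le_exp.mpr
        refine (Complex.re_le_norm _).trans ?_
        rw [norm_neg, norm_pow, norm_mul, Complex.norm_real,
          Real.norm_eq_abs]
        calc (|t| * ‖x‖)^2 ≤ (1 * (‖z‖+1))^2 := by
              apply pow_le_pow_left₀ (by positivity)
              exact mul_le_mul ht1 hxn (norm_nonneg x) zero_le_one
          _ = (‖z‖+1)^2 := by ring
      have h2 : ‖(1 : ℂ) - 2*(t:ℂ)^2*x^2‖ ≤ 1 + 2*(‖z‖+1)^2 := by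
        refine (norm_sub_le _ _).trans ?_
        have he : ‖(2:ℂ)*(t:ℂ)^2*x^2‖ = 2 * |t|^2 * ‖x‖^2 := by
          rw [norm_mul, norm_mul, norm_pow, norm_pow, Complex.norm_real, Real.norm_eq_abs]
          norm_num
        rw [norm_one, he]
        have h3 : |t|^2 * ‖x‖^2 ≤ 1 * (‖z‖+1)^2 :=
          mul_le_mul (by nlinarith [abs_nonneg t]) (by nlinarith [norm_nonneg x])
            (by positivity) zero_le_one
        nlinarith
      exact mul_le_mul h1 h2 (norm_nonneg _) (Real.exp_nonneg _)
    · exact intervalIntegrable_const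
    · refine Filter.Eventually.of_forall fun t ht x hx => ?_
      have hin : HasDerivAt (fun x : ℂ => -((t:ℂ)*x)^2) (-(2*(t:ℂ)^2*x)) x := by
        have h := (((hasDerivAt_id x).const_mul (t:ℂ)).pow 2).neg
        refine h.congr_deriv ?_
        simp; ring
      have h := (hasDerivAt_id x).mul hin.cexp
      refine h.congr_deriv ?_
      simp; ring
  have hint : (∫ t in (0:ℝ)..1, Complex.exp (-((t:ℂ)*z)^2) * (1 - 2*(t:ℂ)^2*z^2))
      = Complex.exp (-z^2) := by
    have hd : ∀ t ∈ Set.uIcc (0:ℝ) 1, HasDerivAt (fun s : ℝ => (s:ℂ) * Complex.exp (-((s:ℂ)*z)^2))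
        (Complex.exp (-((t:ℂ)*z)^2) * (1 - 2*(t:ℂ)^2*z^2)) t := by
      intro t _
      have hC : HasDerivAt (fun u : ℂ => u * Complex.exp (-(u*z)^2))
          (Complex.exp (-((t:ℂ)*z)^2) * (1 - 2*(t:ℂ)^2*z^2)) (t:ℂ) := by
        have hin : HasDerivAt (fun u : ℂ => -(u*z)^2) (-(2*(t:ℂ)*z^2)) (t:ℂ) := by
          have h := (((hasDerivAt_id ((t:ℝ):ℂ)).mul_const z).pow 2).neg
          refine h.congr_deriv ?_
          simp; ring
        have h := (hasDerivAt_id ((t:ℝ):ℂ)).mul hin.cexp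
        refine h.congr_deriv ?_
        simp; ring
      exact hC.comp_ofReal
    rw [intervalIntegral.integral_eq_sub_of_hasDerivAt hd
      (Continuous.intervalIntegrable (by fun_prop) _ _)]
    norm_num
  rw [hint] at key
  have hc : cerf = fun x : ℂ => (2 / Real.sqrt Real.pi : ℂ) *
      ∫ t in (0:ℝ)..1, x * Complex.exp (-((t:ℂ)*x)^2) := by
    funext x
    simp only [cerf]
    rw [intervalIntegral.integral_const_mul]
    ring
  rw [hc]
  exact key.const_mul _

lemma hasDerivAt_S (w z : ℂ) :
    HasDerivAt (fun u : ℂ => cerf (u - w) + cerf w - cerf u)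
      ((2 / Real.sqrt Real.pi : ℂ) * (Complex.exp (-(z-w)^2) - Complex.exp (-z^2))) z := by
  have h1 : HasDerivAt (fun u : ℂ => cerf (u - w))
      ((2 / Real.sqrt Real.pi : ℂ) * Complex.exp (-(z-w)^2)) z := by
    have := (hasDerivAt_cerf (z - w)).comp z ((hasDerivAt_id z).sub_const w)
    exact this.congr_deriv (by simp)
  have h2 := hasDerivAt_cerf z
  have := (h1.add_const (cerf w)).sub h2
  refine this.congr_deriv ?_
  ring

lemma hasDerivAt_main (w z : ℂ) (P : ℂ → ℂ) (dp : ℂ) (hP : HasDerivAt P dp z) :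
    HasDerivAt (fun u : ℂ => (Real.sqrt Real.pi / 4 : ℂ) * (2*w^2-1) * P u
        * Complex.exp (u^2 + w^2) * (cerf (u - w) + cerf w - cerf u))
      ((Real.sqrt Real.pi / 4 : ℂ) * (2*w^2-1) * (dp + 2*z*P z) * Complex.exp (z^2+w^2)
          * (cerf (z - w) + cerf w - cerf z)
        + (2*w^2-1) * P z / 2 * (Complex.exp (2*z*w) - Complex.exp (w^2))) z := by
  have hA : HasDerivAt (fun u : ℂ => (Real.sqrt Real.pi / 4 : ℂ) * (2*w^2-1) * P u)
      ((Real.sqrt Real.pi / 4 : ℂ) * (2*w^2-1) * dp) z := by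
    exact hP.const_mul _
  have hB : HasDerivAt (fun u : ℂ => Complex.exp (u^2 + w^2)) (Complex.exp (z^2+w^2) * (2*z)) z := by
    have := ((hasDerivAt_pow 2 z).add_const (w^2)).cexp
    refine this.congr_deriv ?_
    simp <;> ring
  have hS := hasDerivAt_S w z
  have h := (hA.mul hB).mul hS
  refine h.congr_deriv ?_
  simp only [Pi.mul_apply]
  have hr : ((Real.sqrt Real.pi : ℝ) : ℂ) ≠ 0 :=
    Complex.ofReal_ne_zero.mpr (ne_of_gt (Real.sqrt_pos.mpr Real.pi_pos))
  have f1 : Complex.exp (-(z-w)^2) = Complex.exp (2*z*w) * (Complex.exp (z^2+w^2))⁻¹ := by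
    rw [← Complex.exp_neg, ← Complex.exp_add]; congr 1; ring
  have f2 : Complex.exp (-z^2) = Complex.exp (w^2) * (Complex.exp (z^2+w^2))⁻¹ := by
    rw [← Complex.exp_neg, ← Complex.exp_add]; congr 1; ring
  rw [f1, f2]
  have hE : Complex.exp (z^2+w^2) ≠ 0 := Complex.exp_ne_zero _
  field_simp
  field_simp
  ring

noncomputable def D1 (z w : ℂ) : ℂ :=
  (Real.sqrt Real.pi / 4 : ℂ) * (2*w^2-1) * (4*z^3+2*z) * Complex.exp (z^2+w^2)
      * (cerf (z - w) + cerf w - cerf z)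
    + (2*z^2-1) * (2*w^2-1) / 2 * (Complex.exp (2*z*w) - Complex.exp (w^2))
    - (2*w^2-1)/2 * Complex.exp (w^2)
    + w*z*(2*z^2+1) * Complex.exp (z^2)
    - (1/2 + (z-w)*w) * Complex.exp (2*z*w)

noncomputable def D2 (z w : ℂ) : ℂ :=
  (Real.sqrt Real.pi / 4 : ℂ) * (2*w^2-1) * (8*z^4+16*z^2+2) * Complex.exp (z^2+w^2)
      * (cerf (z - w) + cerf w - cerf z)
    + (2*w^2-1) * (4*z^3+2*z) / 2 * (Complex.exp (2*z*w) - Complex.exp (w^2))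
    + (2*w^2-1)/2 * (4*z*(Complex.exp (2*z*w) - Complex.exp (w^2))
        + 2*w*(2*z^2-1)*Complex.exp (2*z*w))
    + w*(4*z^4+8*z^2+1) * Complex.exp (z^2)
    - (2*w + 2*(z-w)*w^2) * Complex.exp (2*z*w)

lemma hasDerivAt_hat (w z : ℂ) :
    HasDerivAt (fun u : ℂ => hatKappaOrigin u w) (D1 z w) z := by
  have hp : HasDerivAt (fun u : ℂ => 2*u^2 - 1) (4*z) z := by
    have := ((hasDerivAt_pow 2 z).const_mul (2:ℂ)).sub_const 1
    refine this.congr_deriv ?_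
    simp <;> ring
  have hmain := hasDerivAt_main w z _ _ hp
  have hexp2 : HasDerivAt (fun u : ℂ => Complex.exp (u^2)) (Complex.exp (z^2) * (2*z)) z := by
    have := (hasDerivAt_pow 2 z).cexp
    refine this.congr_deriv ?_
    simp <;> ring
  have hexp3 : HasDerivAt (fun u : ℂ => Complex.exp (2*u*w)) (Complex.exp (2*z*w) * (2*w)) z := by
    have := (((hasDerivAt_id z).const_mul (2:ℂ)).mul_const w).cexp
    refine this.congr_deriv ?_
    simp <;> ring
  have h2 : HasDerivAt (fun u : ℂ => u * ((2*w^2-1)/2 * Complex.exp (w^2)))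
      ((2*w^2-1)/2 * Complex.exp (w^2)) z := by
    simpa using (hasDerivAt_id z).mul_const ((2*w^2-1)/2 * Complex.exp (w^2))
  have h3 := ((hp.mul_const (w/2)).mul hexp2)
  have h4 := (((hasDerivAt_id z).sub_const w).div_const 2).mul hexp3
  have h := ((hmain.sub h2).add h3).sub h4
  have heq : (fun u : ℂ => hatKappaOrigin u w) =ᶠ[nhds z]
      (fun u : ℂ => (Real.sqrt Real.pi / 4 : ℂ) * (2*w^2-1) * (2*u^2-1)
          * Complex.exp (u^2 + w^2) * (cerf (u - w) + cerf w - cerf u)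
        - u * ((2*w^2-1)/2 * Complex.exp (w^2))
        + (2*u^2-1) * (w/2) * Complex.exp (u^2)
        - (u - w)/2 * Complex.exp (2*u*w)) :=
    Filter.Eventually.of_forall fun u => by simp only [hatKappaOrigin]; ring
  have h' := h.congr_of_eventuallyEq heq
  refine h'.congr_deriv ?_
  simp only [D1, id_eq]
  ring

lemma hasDerivAt_D1 (w z : ℂ) :
    HasDerivAt (fun u : ℂ => D1 u w) (D2 z w) z := by
  have hp : HasDerivAt (fun u : ℂ => 2*u^2 - 1) (4*z) z := by
    have := ((hasDerivAt_pow 2 z).const_mul (2:ℂ)).sub_const 1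
    refine this.congr_deriv ?_
    simp <;> ring
  have hp2 : HasDerivAt (fun u : ℂ => 4*u^3 + 2*u) (12*z^2+2) z := by
    have := ((hasDerivAt_pow 3 z).const_mul (4:ℂ)).add ((hasDerivAt_id z).const_mul (2:ℂ))
    refine this.congr_deriv ?_
    simp <;> ring
  have hmain := hasDerivAt_main w z _ _ hp2
  have hexp2 : HasDerivAt (fun u : ℂ => Complex.exp (u^2)) (Complex.exp (z^2) * (2*z)) z := by
    have := (hasDerivAt_pow 2 z).cexp
    refine this.congr_deriv ?_
    simp <;> ring
  have hexp3 : HasDerivAt (fun u : ℂ => Complex.exp (2*u*w)) (Complex.exp (2*z*w) * (2*w)) z := by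
    have := (((hasDerivAt_id z).const_mul (2:ℂ)).mul_const w).cexp
    refine this.congr_deriv ?_
    simp <;> ring
  have t2 := ((hp.mul_const (2*w^2-1)).div_const 2).mul (hexp3.sub_const (Complex.exp (w^2)))
  have t3 := (((hasDerivAt_id z).const_mul w).mul
    (((hasDerivAt_pow 2 z).const_mul (2:ℂ)).add_const 1)).mul hexp2
  have t4 := ((((hasDerivAt_id z).sub_const w).mul_const w).const_add ((1:ℂ)/2)).mul hexp3
  have h := ((((hmain.add t2).sub_const ((2*w^2-1)/2 * Complex.exp (w^2))).add t3).sub t4)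
  have heq : (fun u : ℂ => D1 u w) =ᶠ[nhds z]
      (fun u : ℂ => ((Real.sqrt Real.pi / 4 : ℂ) * (2*w^2-1) * (4*u^3+2*u)
            * Complex.exp (u^2 + w^2) * (cerf (u - w) + cerf w - cerf u)
          + (2*u^2-1)*(2*w^2-1)/2 * (Complex.exp (2*u*w) - Complex.exp (w^2))
          - (2*w^2-1)/2 * Complex.exp (w^2)
          + w*u*(2*u^2+1) * Complex.exp (u^2))
          - (1/2 + (u-w)*w) * Complex.exp (2*u*w)) :=
    Filter.Eventually.of_forall fun u => by simp only [D1]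
  have h' := h.congr_of_eventuallyEq heq
  refine h'.congr_deriv ?_
  simp only [D2, id_eq, Pi.mul_apply]
  ring

theorem stmt_9 :
    (∀ z w : ℂ, z * w ≠ 0 → hatKappaOrigin z w = (z * w) ^ 3 * kappaOrigin z w) ∧
    (∀ z w : ℂ,
      z * deriv (deriv (fun u : ℂ => hatKappaOrigin u w)) z -
          (2 * z ^ 2 + 2) * deriv (fun u : ℂ => hatKappaOrigin u w) z -
            2 * z * hatKappaOrigin z w =
        4 * (z * w) ^ 3 * Complex.exp (2 * z * w)) := by
  constructor
  · intro z w hzw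
    have h3 : (z*w)^3 ≠ 0 := pow_ne_zero _ hzw
    have hz : z ≠ 0 := left_ne_zero_of_mul hzw
    have hw : w ≠ 0 := right_ne_zero_of_mul hzw
    simp only [kappaOrigin, hatKappaOrigin]
    have e1 : (z*w)^3 * ((Real.sqrt Real.pi / 4 : ℂ) *
        ((2 * z ^ 2 - 1) * (2 * w ^ 2 - 1) / (z * w) ^ 3) * Complex.exp (z ^ 2 + w ^ 2) *
        (cerf (z - w) + cerf w - cerf z))
        = (Real.sqrt Real.pi / 4 : ℂ) * ((2 * z ^ 2 - 1) * (2 * w ^ 2 - 1)) *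
          Complex.exp (z ^ 2 + w ^ 2) * (cerf (z - w) + cerf w - cerf z) := by
      field_simp
    have e2 : (z*w)^3 * (z * (2 * w ^ 2 - 1) / (2 * (z * w) ^ 3) * Complex.exp (w ^ 2))
        = z * (2 * w ^ 2 - 1) / 2 * Complex.exp (w ^ 2) := by
      field_simp
    have e3 : (z*w)^3 * (w * (2 * z ^ 2 - 1) / (2 * (z * w) ^ 3) * Complex.exp (z ^ 2))
        = w * (2 * z ^ 2 - 1) / 2 * Complex.exp (z ^ 2) := by
      field_simp
    have e4 : (z*w)^3 * ((z - w) / (2 * (z * w) ^ 3) * Complex.exp (2 * z * w))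
        = (z - w) / 2 * Complex.exp (2 * z * w) := by
      field_simp
    linear_combination -e1 + e2 - e3 + e4
  · intro z w
    have hd1 : deriv (fun u : ℂ => hatKappaOrigin u w) = fun x => D1 x w :=
      funext fun x => (hasDerivAt_hat w x).deriv
    rw [hd1]
    simp only
    rw [(hasDerivAt_D1 w z).deriv]
    simp only [hatKappaOrigin, D1, D2, Complex.exp_add]
    ring
end

section
/- For any positive Borel measure μ on ℂ and the skew-product ⟨f,g⟩_s = ∫_ℂ (f \bar g − g \bar f)(z − \bar z) dμ(z): if μ is radially symmetric with finite moments h_k = ∫_ℂ |z|^{2k} dμ(z), then the polynomials q_{2k+1}(z) = z^{2k+1} and q_{2k}(z) = z^{2k} + ∑_{ℓ=0}^{k-1} z^{2ℓ} ∏_{j=0}^{k-ℓ-1} h_{2ℓ+2j+2}/h_{2ℓ+2j+1} form a family of skew-orthogonal polynomials with skew-norms r_k = 2 h_{2k+1}, i.e. ⟨q_{2k}, q_{2ℓ}⟩_s = ⟨q_{2k+1}, q_{2ℓ+1}⟩_s = 0 and ⟨q_{2k}, q_{2ℓ+1}⟩_s = r_k δ_{k,ℓ}. -/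
/-!
Rotation invariance of `μ` kills every mixed moment `∫ z ^ m * conj z ^ n` with `m ≠ n`, so the
skew-product of two monomials is `⟨z^a, z^b⟩_s = 2 h_b [a + 1 = b] - 2 h_a [a = b + 1]`.
Invariance under `z ↦ -z` makes the skew-integrand odd whenever `f` and `g` have the same parity,
which disposes of the even–even and odd–odd products. In `⟨q_{2k}, z^{2l+1}⟩_s` only the
coefficients of `z^{2l}` and `z^{2l+2}` survive, and the coefficients of `q_{2k}` are built so that
these two contributions cancel for `l < k`.
-/

open MeasureTheory ComplexConjugate

theorem Circle.exists_pow_mul_conj_pow_eq_neg_one {m n : ℕ} (hmn : m ≠ n) :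
    ∃ e : Circle, (e : ℂ) ^ m * conj (e : ℂ) ^ n = -1 := by
  have hd : ((m : ℂ) - n) ≠ 0 := sub_ne_zero.2 (by exact_mod_cast hmn)
  refine ⟨Circle.exp (Real.pi / (m - n)), ?_⟩
  rw [Circle.coe_exp, ← Complex.exp_conj, ← Complex.exp_nat_mul, ← Complex.exp_nat_mul,
    ← Complex.exp_add, ← Complex.exp_pi_mul_I]
  congr 1
  simp only [map_mul, Complex.conj_ofReal, Complex.conj_I]
  push_cast
  field_simp
  ring

theorem smulInvariantMeasure_circle_withDensity_norm (ρ : ℝ → ENNReal) :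
    SMulInvariantMeasure Circle ℂ ((volume : Measure ℂ).withDensity fun z => ρ ‖z‖) := by
  refine ⟨fun e s hs => ?_⟩
  have hrot : MeasurePreserving (e • · : ℂ → ℂ) volume volume := (rotation e).measurePreserving
  rw [withDensity_apply _ (hs.preimage hrot.measurable), withDensity_apply _ hs,
    ← hrot.setLIntegral_comp_preimage_emb (measurableEmbedding_const_smul e) (fun z => ρ ‖z‖) s]
  simp

theorem isNegInvariant_of_smulInvariantMeasure_circle (μ : Measure ℂ)
    [SMulInvariantMeasure Circle ℂ μ] : μ.IsNegInvariant := by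
  have h : (fun z : ℂ => (-1 : Circle) • z) = Neg.neg := funext fun z => by
    rw [Circle.smul_def]; simp
  exact ⟨by rw [Measure.neg, ← h, MeasureTheory.map_smul]⟩

theorem integral_pow_mul_conj_pow_self (μ : Measure ℂ) (m : ℕ) :
    ∫ z, z ^ m * conj z ^ m ∂μ = ((∫ z, ‖z‖ ^ (2 * m) ∂μ : ℝ) : ℂ) := by
  rw [← integral_complex_ofReal]
  congr 1 with z
  rw [← mul_pow, Complex.mul_conj, pow_mul, ← Complex.sq_norm]
  push_cast
  rfl

theorem integral_pow_mul_conj_pow_of_ne (μ : Measure ℂ) [SMulInvariantMeasure Circle ℂ μ]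
    {m n : ℕ} (hmn : m ≠ n) : ∫ z, z ^ m * conj z ^ n ∂μ = 0 := by
  obtain ⟨e, he⟩ := Circle.exists_pow_mul_conj_pow_eq_neg_one hmn
  have hrot := integral_smul_eq_self (μ := μ) (fun z => z ^ m * conj z ^ n) (g := e)
  simp only [Circle.smul_def, smul_eq_mul, mul_pow, map_mul, mul_mul_mul_comm _ (_ ^ m), he,
    neg_one_mul, integral_neg] at hrot
  exact CharZero.eq_neg_self_iff.1 hrot.symm

theorem integral_pow_mul_conj_pow (μ : Measure ℂ) [SMulInvariantMeasure Circle ℂ μ] (m n : ℕ) :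
    ∫ z, z ^ m * conj z ^ n ∂μ = if m = n then ((∫ z, ‖z‖ ^ (2 * m) ∂μ : ℝ) : ℂ) else 0 := by
  split_ifs with hmn
  · rw [hmn, integral_pow_mul_conj_pow_self]
  · exact integral_pow_mul_conj_pow_of_ne μ hmn

theorem integrable_pow_mul_conj_pow {μ : Measure ℂ}
    (hfin : ∀ m : ℕ, Integrable (fun z : ℂ => ‖z‖ ^ (2 * m)) μ) (m n : ℕ) :
    Integrable (fun z => z ^ m * conj z ^ n) μ := by
  refine ((hfin 0).add (hfin (m + n))).mono (by fun_prop) (ae_of_all _ fun z => ?_)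
  calc ‖z ^ m * conj z ^ n‖ = ‖z‖ ^ (m + n) := by simp [pow_add]
    _ ≤ 1 + (‖z‖ ^ (m + n)) ^ 2 := by nlinarith [sq_nonneg (‖z‖ ^ (m + n) - 1)]
    _ = ‖‖z‖ ^ (2 * 0) + ‖z‖ ^ (2 * (m + n))‖ := by
      rw [Real.norm_of_nonneg (by positivity)]; ring

def skewIntegrand (f g : ℂ → ℂ) (z : ℂ) : ℂ :=
  (f z * conj (g z) - g z * conj (f z)) * (z - conj z)

noncomputable def skewProduct (μ : Measure ℂ) (f g : ℂ → ℂ) : ℂ :=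
  ∫ z, skewIntegrand f g z ∂μ

theorem skewProduct_eq_zero_of_even (μ : Measure ℂ) [μ.IsNegInvariant] {f g : ℂ → ℂ}
    (hfg : ∀ z, f (-z) * conj (g (-z)) = f z * conj (g z)) : skewProduct μ f g = 0 := by
  have hodd : ∀ z, skewIntegrand f g (-z) = -skewIntegrand f g z := fun z => by
    have hgf : g (-z) * conj (f (-z)) = g z * conj (f z) := by
      simpa only [map_mul, Complex.conj_conj, mul_comm] using congrArg conj (hfg z)
    simp only [skewIntegrand, hfg, hgf, map_neg]
    ring
  have hneg := integral_neg_eq_self (skewIntegrand f g) μ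
  simp only [hodd, integral_neg] at hneg
  exact CharZero.eq_neg_self_iff.1 hneg.symm

theorem skewIntegrand_pow_pow (a b : ℕ) (z : ℂ) :
    skewIntegrand (· ^ a) (· ^ b) z =
      (z ^ (a + 1) * conj z ^ b - z ^ a * conj z ^ (b + 1)) -
        (z ^ (b + 1) * conj z ^ a - z ^ b * conj z ^ (a + 1)) := by
  simp only [skewIntegrand, map_pow]
  ring

theorem integrable_skewIntegrand_pow_pow {μ : Measure ℂ}
    (hfin : ∀ m : ℕ, Integrable (fun z : ℂ => ‖z‖ ^ (2 * m)) μ) (a b : ℕ) :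
    Integrable (skewIntegrand (· ^ a) (· ^ b)) μ := by
  have hmon := integrable_pow_mul_conj_pow hfin
  rw [show skewIntegrand (· ^ a) (· ^ b) = _ from funext (skewIntegrand_pow_pow a b)]
  exact ((hmon (a + 1) b).sub (hmon a (b + 1))).sub ((hmon (b + 1) a).sub (hmon b (a + 1)))

theorem skewProduct_pow_pow (μ : Measure ℂ) [SMulInvariantMeasure Circle ℂ μ]
    (hfin : ∀ m : ℕ, Integrable (fun z : ℂ => ‖z‖ ^ (2 * m)) μ) (a b : ℕ) :
    skewProduct μ (· ^ a) (· ^ b) =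
      (if a + 1 = b then ((2 * ∫ z, ‖z‖ ^ (2 * b) ∂μ : ℝ) : ℂ) else 0) -
        (if a = b + 1 then ((2 * ∫ z, ‖z‖ ^ (2 * a) ∂μ : ℝ) : ℂ) else 0) := by
  have hmon := integrable_pow_mul_conj_pow hfin
  simp only [skewProduct, skewIntegrand_pow_pow]
  rw [integral_sub (by exact (hmon _ _).sub (hmon _ _)) (by exact (hmon _ _).sub (hmon _ _)),
    integral_sub (hmon _ _) (hmon _ _), integral_sub (hmon _ _) (hmon _ _)]
  simp only [integral_pow_mul_conj_pow]
  split_ifs <;> first | omega | (subst_vars; push_cast; ring)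

theorem skewIntegrand_sum_left {ι : Type*} (s : Finset ι) (c : ι → ℝ) (f : ι → ℂ → ℂ)
    (g : ℂ → ℂ) (z : ℂ) :
    skewIntegrand (fun z => ∑ i ∈ s, (c i : ℂ) * f i z) g z =
      ∑ i ∈ s, (c i : ℂ) * skewIntegrand (f i) g z := by
  simp only [skewIntegrand, map_sum, map_mul, Complex.conj_ofReal, Finset.sum_mul, Finset.mul_sum,
    ← Finset.sum_sub_distrib]
  refine Finset.sum_congr rfl fun i _ => by ring

theorem skewProduct_sum_left {ι : Type*} (μ : Measure ℂ) (s : Finset ι) (c : ι → ℝ)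
    (f : ι → ℂ → ℂ) (g : ℂ → ℂ) (hf : ∀ i ∈ s, Integrable (skewIntegrand (f i) g) μ) :
    skewProduct μ (fun z => ∑ i ∈ s, (c i : ℂ) * f i z) g =
      ∑ i ∈ s, (c i : ℂ) * skewProduct μ (f i) g := by
  simp only [skewProduct, skewIntegrand_sum_left]
  rw [integral_finsetSum _ fun i hi => (hf i hi).const_mul _]
  simp only [integral_const_mul]

theorem skewProduct_sum_even_pow_odd (μ : Measure ℂ) [SMulInvariantMeasure Circle ℂ μ]
    (hfin : ∀ m : ℕ, Integrable (fun z : ℂ => ‖z‖ ^ (2 * m)) μ) (c : ℕ → ℝ) (k l : ℕ) :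
    skewProduct μ (fun z => ∑ a ∈ Finset.range (k + 1), (c a : ℂ) * z ^ (2 * a)) (· ^ (2 * l + 1)) =
      ((2 * ∑ a ∈ Finset.range (k + 1), c a *
        ((if a = l then ∫ z, ‖z‖ ^ (2 * (2 * l + 1)) ∂μ else 0) -
          (if a = l + 1 then ∫ z, ‖z‖ ^ (2 * (2 * l + 2)) ∂μ else 0)) : ℝ) : ℂ) := by
  rw [skewProduct_sum_left μ _ c (fun a z => z ^ (2 * a)) _
    fun a _ => integrable_skewIntegrand_pow_pow hfin _ _]
  push_cast [Finset.mul_sum]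
  refine Finset.sum_congr rfl fun a _ => ?_
  rw [skewProduct_pow_pow μ hfin]
  split_ifs <;> first | omega | (subst_vars; push_cast; ring_nf)

noncomputable def skewCoeff (h : ℕ → ℝ) (k l : ℕ) : ℝ :=
  ∏ j ∈ Finset.range (k - l), h (2 * l + 2 * j + 2) / h (2 * l + 2 * j + 1)

theorem skewCoeff_self (h : ℕ → ℝ) (k : ℕ) : skewCoeff h k k = 1 := by
  simp [skewCoeff]

theorem skewCoeff_mul_of_lt (h : ℕ → ℝ) {k l : ℕ} (hlk : l < k) (hl : h (2 * l + 1) ≠ 0) :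
    skewCoeff h k l * h (2 * l + 1) = skewCoeff h k (l + 1) * h (2 * l + 2) := by
  have hkl : k - l = k - (l + 1) + 1 := by omega
  rw [skewCoeff, hkl, Finset.prod_range_succ', skewCoeff, mul_assoc, div_mul_cancel₀ _ hl]
  congr 2 with j
  ring_nf

theorem sum_skewCoeff_mul_sub (h : ℕ → ℝ) (hodd : ∀ m, h (2 * m + 1) ≠ 0) (k l : ℕ) :
    ∑ a ∈ Finset.range (k + 1), skewCoeff h k a *
        ((if a = l then h (2 * l + 1) else 0) - (if a = l + 1 then h (2 * l + 2) else 0)) =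
      if k = l then h (2 * k + 1) else 0 := by
  simp only [mul_sub, mul_ite, mul_zero, Finset.sum_sub_distrib, Finset.sum_ite_eq',
    Finset.mem_range]
  rcases lt_trichotomy l k with hlk | rfl | hkl
  · rw [if_pos (by omega), if_pos (by omega), if_neg (by omega), skewCoeff_mul_of_lt h hlk (hodd l),
      sub_self]
  · simp [skewCoeff_self]
  · rw [if_neg (by omega), if_neg (by omega), if_neg (by omega), sub_zero]

theorem sum_skewCoeff_mul_pow (h : ℕ → ℝ) (k : ℕ) (z : ℂ) :
    ∑ a ∈ Finset.range (k + 1), (skewCoeff h k a : ℂ) * z ^ (2 * a) =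
      z ^ (2 * k) + ∑ l ∈ Finset.range k, z ^ (2 * l) *
        ∏ j ∈ Finset.range (k - l), ((h (2 * l + 2 * j + 2) / h (2 * l + 2 * j + 1) : ℝ) : ℂ) := by
  rw [Finset.sum_range_succ, skewCoeff_self, add_comm]
  push_cast [skewCoeff, one_mul, mul_comm]
  rfl

theorem stmt_15_general
    (w : ℝ → ℝ)
    (μ : Measure ℂ)
    (hμ : μ = (volume : Measure ℂ).withDensity
      (fun z => ENNReal.ofReal (w (‖z‖) / Real.pi)))
    (h : ℕ → ℝ)
    (hh : ∀ m : ℕ, h m = ∫ z : ℂ, ‖z‖ ^ (2 * m) ∂μ)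
    (hfin : ∀ m : ℕ, Integrable (fun z : ℂ => ‖z‖ ^ (2 * m)) μ)
    (hpos : ∀ m : ℕ, 0 < h m)
    -- the skew-product
    (S : (ℂ → ℂ) → (ℂ → ℂ) → ℂ)
    (hS : ∀ f g : ℂ → ℂ, S f g =
      ∫ z : ℂ, (f z * starRingEnd ℂ (g z) - g z * starRingEnd ℂ (f z)) *
        (z - starRingEnd ℂ z) ∂μ)
    -- the skew-orthogonal polynomials
    (qe qo : ℕ → ℂ → ℂ)
    (hqo : ∀ k : ℕ, ∀ z : ℂ, qo k z = z ^ (2 * k + 1))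
    (hqe : ∀ k : ℕ, ∀ z : ℂ, qe k z =
      z ^ (2 * k) + ∑ l ∈ Finset.range k, z ^ (2 * l) *
        ∏ j ∈ Finset.range (k - l), ((h (2 * l + 2 * j + 2) / h (2 * l + 2 * j + 1) : ℝ) : ℂ)) :
    (∀ k l : ℕ, S (qe k) (qe l) = 0) ∧
    (∀ k l : ℕ, S (qo k) (qo l) = 0) ∧
    (∀ k l : ℕ, S (qe k) (qo l) = if k = l then ((2 * h (2 * k + 1) : ℝ) : ℂ) else 0) := by
  have hrot : SMulInvariantMeasure Circle ℂ μ :=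
    hμ ▸ smulInvariantMeasure_circle_withDensity_norm fun r => ENNReal.ofReal (w r / Real.pi)
  have := isNegInvariant_of_smulInvariantMeasure_circle μ
  obtain rfl : S = skewProduct μ := funext fun f => funext (hS f)
  obtain rfl : qo = fun k z => z ^ (2 * k + 1) := funext fun k => funext (hqo k)
  obtain rfl : qe = fun k z => ∑ a ∈ Finset.range (k + 1), (skewCoeff h k a : ℂ) * z ^ (2 * a) :=
    funext fun k => funext fun z => (hqe k z).trans (sum_skewCoeff_mul_pow h k z).symm
  refine ⟨fun k l => skewProduct_eq_zero_of_even μ fun z => ?_,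
    fun k l => skewProduct_eq_zero_of_even μ fun z => ?_, fun k l => ?_⟩
  · simp [pow_mul]
  · simp [pow_succ, pow_mul]
  · rw [skewProduct_sum_even_pow_odd μ hfin, ← hh, ← hh,
      sum_skewCoeff_mul_sub h fun m => (hpos _).ne']
    split_ifs <;> simp

theorem stmt_15
    (w : ℝ → ℝ) (hw : ∀ r, 0 ≤ w r)
    (μ : Measure ℂ)
    (hμ : μ = (volume : Measure ℂ).withDensity
      (fun z => ENNReal.ofReal (w (‖z‖) / Real.pi)))
    (h : ℕ → ℝ)
    (hh : ∀ m : ℕ, h m = ∫ z : ℂ, ‖z‖ ^ (2 * m) ∂μ)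
    (hfin : ∀ m : ℕ, Integrable (fun z : ℂ => ‖z‖ ^ (2 * m)) μ)
    (hpos : ∀ m : ℕ, 0 < h m)
    -- the skew-product
    (S : (ℂ → ℂ) → (ℂ → ℂ) → ℂ)
    (hS : ∀ f g : ℂ → ℂ, S f g =
      ∫ z : ℂ, (f z * starRingEnd ℂ (g z) - g z * starRingEnd ℂ (f z)) *
        (z - starRingEnd ℂ z) ∂μ)
    -- the skew-orthogonal polynomials
    (qe qo : ℕ → ℂ → ℂ)
    (hqo : ∀ k : ℕ, ∀ z : ℂ, qo k z = z ^ (2 * k + 1))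
    (hqe : ∀ k : ℕ, ∀ z : ℂ, qe k z =
      z ^ (2 * k) + ∑ l ∈ Finset.range k, z ^ (2 * l) *
        ∏ j ∈ Finset.range (k - l), ((h (2 * l + 2 * j + 2) / h (2 * l + 2 * j + 1) : ℝ) : ℂ)) :
    (∀ k l : ℕ, S (qe k) (qe l) = 0) ∧
    (∀ k l : ℕ, S (qo k) (qo l) = 0) ∧
    (∀ k l : ℕ, S (qe k) (qo l) = if k = l then ((2 * h (2 * k + 1) : ℝ) : ℂ) else 0) :=
  stmt_15_general w μ hμ h hh hfin hpos S hS qe qo hqo hqe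
end
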